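/- Let w ∈ S_n and (a,b) a lower outside corner of D(w) with rk_w(a,b) = 0. Then the variable z_{a,b} lies in the Schubert determinantal ideal I_w; moreover I_w = I_v + (z_{a,b}) where v = w·t_{a,w⁻¹(b)}, since D(w) = D(v) ∪ {(a,b)} and the rank conditions of v at cells other than (a,b) agree with those of w. -/

import Mathlib

/-- The rank function of a permutation: `rk u a b = #{i ≤ a : u i ≤ b}` (0-indexed). -/
def rkIic {n : ℕ} (u : Equiv.Perm (Fin n)) (a b : Fin n) : ℕ :=
  (Finset.univ.filter (fun i : Fin n => i ≤ a ∧ u i ≤ b)).card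

/-- The Rothe diagram `D(w)` (0-indexed). -/
def Dset {n : ℕ} (w : Equiv.Perm (Fin n)) : Set (Fin n × Fin n) :=
  {p | p.2 < w p.1 ∧ p.1 < w⁻¹ p.2}

/-- Lower outside corner: maximally southeast element of `D(w)`. -/
def IsLOC {n : ℕ} (w : Equiv.Perm (Fin n)) (p : Fin n × Fin n) : Prop :=
  p ∈ Dset w ∧ ∀ q ∈ Dset w, p.1 ≤ q.1 → p.2 ≤ q.2 → q = p

/-- The ideal of `k × k` minors of the top-left `(a+1) × (b+1)` submatrix of the
generic matrix `Z = (z_{ij})`. -/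
noncomputable def minorIdeal {κ : Type} [Field κ] {n : ℕ} (k : ℕ) (a b : Fin n) :
    Ideal (MvPolynomial (Fin n × Fin n) κ) :=
  Ideal.span
    {f | ∃ ρ γ : Fin k → Fin n, StrictMono ρ ∧ StrictMono γ ∧
      (∀ t, ρ t ≤ a) ∧ (∀ t, γ t ≤ b) ∧
      f = Matrix.det (Matrix.of fun s t : Fin k =>
        (MvPolynomial.X (ρ s, γ t) : MvPolynomial (Fin n × Fin n) κ))}

/-- The Schubert determinantal ideal `I_w = Σ_{i,j} I_{rk_w(i,j)+1}(Z_{[i],[j]})`. -/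
noncomputable def schubertIdeal {κ : Type} [Field κ] {n : ℕ}
    (w : Equiv.Perm (Fin n)) : Ideal (MvPolynomial (Fin n × Fin n) κ) :=
  ∑ p : Fin n × Fin n, minorIdeal (κ := κ) (rkIic w p.1 p.2 + 1) p.1 p.2

/-!
Put `c = w⁻¹ b` and `v = w·t_{a,c}`. Swapping the values at rows `a` and `c` raises the rank
function by one exactly on the rectangle `[a, c) × [b, w a)` and leaves it unchanged elsewhere;
as `k + 1`-minors lie in the ideal of `k`-minors, this gives `I_v ⊆ I_w`.

Conversely, off the rectangle the rank conditions of `w` and `v` coincide. Inside it, `(a, b)`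
being a lower outside corner means no other cell is in `D(w)`, so from `(i, j)` one can step to
`(i - 1, j)` (when `w i ≤ j`) or to `(i, j - 1)` (when `w⁻¹ j ≤ i`), which lowers the rank by
one; a Laplace expansion along the last row or column shows that the rank condition only gets
stronger. Walking back to `(a, b)` ends in the `1 × 1` minors `z_{st}` with `s ≤ a`, `t ≤ b`,
and all of them except `z_{ab}` lie in `I_v`, because `rk_v` vanishes there.
-/

open MvPolynomial

section Rank

variable {n : ℕ}

lemma rkIic_eq_sum (u : Equiv.Perm (Fin n)) (i j : Fin n) :
    rkIic u i j = ∑ s : Fin n, if s ≤ i ∧ u s ≤ j then 1 else 0 :=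
  Finset.card_filter _ _

lemma rkIic_mono (u : Equiv.Perm (Fin n)) {i i' j j' : Fin n} (hi : i ≤ i') (hj : j ≤ j') :
    rkIic u i j ≤ rkIic u i' j' :=
  Finset.card_le_card <| Finset.monotone_filter_right _
    fun _ _ => And.imp (le_trans · hi) (le_trans · hj)

lemma rkIic_inv (u : Equiv.Perm (Fin n)) (i j : Fin n) : rkIic u⁻¹ j i = rkIic u i j :=
  Finset.card_bij' (fun t _ => u⁻¹ t) (fun s _ => u s) (by simp +contextual)
    (by simp +contextual) (by simp) (by simp)

lemma rkIic_of_succ_eq_row (u : Equiv.Perm (Fin n)) {i i' : Fin n} (j : Fin n)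
    (hi : (i' : ℕ) + 1 = i) :
    rkIic u i j = rkIic u i' j + if u i ≤ j then 1 else 0 := by
  rw [rkIic_eq_sum, rkIic_eq_sum, ← Fintype.sum_ite_eq' i (fun s => if u s ≤ j then 1 else 0),
    ← Finset.sum_add_distrib]
  refine Finset.sum_congr rfl fun s _ => ?_
  by_cases hs : s = i
  · have : ¬ i ≤ i' := by simp only [Fin.le_def]; omega
    simp [hs, this]
  · have : s ≤ i ↔ s ≤ i' := by simp only [Fin.le_def]; omega
    simp [hs, this]

lemma rkIic_of_succ_eq_col (u : Equiv.Perm (Fin n)) (i : Fin n) {j j' : Fin n}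
    (hj : (j' : ℕ) + 1 = j) :
    rkIic u i j = rkIic u i j' + if u⁻¹ j ≤ i then 1 else 0 := by
  rw [← rkIic_inv, ← rkIic_inv u i j', rkIic_of_succ_eq_row _ _ hj]

open Finset in
lemma rkIic_mul_swap (w : Equiv.Perm (Fin n)) {a b : Fin n} (hab : (a, b) ∈ Dset w)
    (i j : Fin n) :
    rkIic (w * Equiv.swap a (w⁻¹ b)) i j =
      rkIic w i j + if a ≤ i ∧ i < w⁻¹ b ∧ b ≤ j ∧ j < w a then 1 else 0 := by
  obtain ⟨hba, hac⟩ : b < w a ∧ a < w⁻¹ b := hab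
  set c := w⁻¹ b
  have hwc : w c = b := w.apply_symm_apply b
  have hca : c ∈ univ.erase a := mem_erase.2 ⟨hac.ne', mem_univ c⟩
  simp only [rkIic_eq_sum]
  rw [← add_sum_erase _ _ (mem_univ a), ← add_sum_erase _ _ hca,
    ← add_sum_erase _ _ (mem_univ a), ← add_sum_erase _ _ hca,
    sum_congr rfl fun s hs => by
      rw [Equiv.Perm.mul_apply, Equiv.swap_apply_of_ne_of_ne
        (ne_of_mem_erase (mem_of_mem_erase hs)) (ne_of_mem_erase hs)]]
  simp only [Equiv.Perm.mul_apply, Equiv.swap_apply_left, Equiv.swap_apply_right, hwc,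
    Fin.le_def, Fin.lt_def] at hba hac ⊢
  split_ifs <;> omega

end Rank

section MinorIdeal

variable {κ : Type} [Field κ] {n : ℕ}

lemma det_mem_minorIdeal_of_row {k : ℕ} {a b : Fin n} {ρ γ : Fin (k + 1) → Fin n}
    (hρ : StrictMono ρ) (hγ : StrictMono γ) (p : Fin (k + 1))
    (hρa : ∀ t, t ≠ p → ρ t ≤ a) (hγb : ∀ t, γ t ≤ b) :
    (Matrix.of fun s t => (X (ρ s, γ t) : MvPolynomial (Fin n × Fin n) κ)).det ∈
      minorIdeal (κ := κ) k a b := by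
  rw [Matrix.det_succ_row _ p]
  exact Ideal.sum_mem _ fun q _ => Ideal.mul_mem_left _ _ <| Ideal.subset_span
    ⟨ρ ∘ p.succAbove, γ ∘ q.succAbove, hρ.comp (Fin.strictMono_succAbove p),
      hγ.comp (Fin.strictMono_succAbove q), fun t => hρa _ (Fin.succAbove_ne p t),
      fun t => hγb _, rfl⟩

lemma det_mem_minorIdeal_of_col {k : ℕ} {a b : Fin n} {ρ γ : Fin (k + 1) → Fin n}
    (hρ : StrictMono ρ) (hγ : StrictMono γ) (p : Fin (k + 1)) (hρa : ∀ t, ρ t ≤ a)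
    (hγb : ∀ t, t ≠ p → γ t ≤ b) :
    (Matrix.of fun s t => (X (ρ s, γ t) : MvPolynomial (Fin n × Fin n) κ)).det ∈
      minorIdeal (κ := κ) k a b := by
  rw [Matrix.det_succ_column _ p]
  exact Ideal.sum_mem _ fun q _ => Ideal.mul_mem_left _ _ <| Ideal.subset_span
    ⟨ρ ∘ q.succAbove, γ ∘ p.succAbove, hρ.comp (Fin.strictMono_succAbove q),
      hγ.comp (Fin.strictMono_succAbove p), fun t => hρa _,
      fun t => hγb _ (Fin.succAbove_ne p t), rfl⟩

lemma minorIdeal_succ_le (k : ℕ) (a b : Fin n) :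
    minorIdeal (κ := κ) (k + 1) a b ≤ minorIdeal (κ := κ) k a b := by
  rw [minorIdeal, Ideal.span_le]
  rintro _ ⟨ρ, γ, hρ, hγ, hρa, hγb, rfl⟩
  exact det_mem_minorIdeal_of_row hρ hγ 0 (fun t _ => hρa t) hγb

/-- Only the last row of a minor can be row `a`; expanding along it leaves minors in
rows `≤ a'`. -/
lemma minorIdeal_succ_le_of_succ_eq_row (k : ℕ) {a a' : Fin n} (b : Fin n)
    (ha : (a' : ℕ) + 1 = a) :
    minorIdeal (κ := κ) (k + 1) a b ≤ minorIdeal (κ := κ) k a' b := by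
  rw [minorIdeal, Ideal.span_le]
  rintro _ ⟨ρ, γ, hρ, hγ, hρa, hγb, rfl⟩
  refine det_mem_minorIdeal_of_row hρ hγ (Fin.last k) (fun t ht => ?_) hγb
  have hlt := hρ (Fin.lt_last_iff_ne_last.2 ht)
  have hle := hρa (Fin.last k)
  simp only [Fin.le_def, Fin.lt_def] at hlt hle ⊢
  omega

lemma minorIdeal_succ_le_of_succ_eq_col (k : ℕ) (a : Fin n) {b b' : Fin n}
    (hb : (b' : ℕ) + 1 = b) :
    minorIdeal (κ := κ) (k + 1) a b ≤ minorIdeal (κ := κ) k a b' := by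
  rw [minorIdeal, Ideal.span_le]
  rintro _ ⟨ρ, γ, hρ, hγ, hρa, hγb, rfl⟩
  refine det_mem_minorIdeal_of_col hρ hγ (Fin.last k) hρa (fun t ht => ?_)
  have hlt := hγ (Fin.lt_last_iff_ne_last.2 ht)
  have hle := hγb (Fin.last k)
  simp only [Fin.le_def, Fin.lt_def] at hlt hle ⊢
  omega

lemma X_mem_minorIdeal_one {a b s t : Fin n} (hs : s ≤ a) (ht : t ≤ b) :
    (X (s, t) : MvPolynomial (Fin n × Fin n) κ) ∈ minorIdeal (κ := κ) 1 a b :=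
  Ideal.subset_span ⟨fun _ => s, fun _ => t, Subsingleton.strictMono _,
    Subsingleton.strictMono _, fun _ => hs, fun _ => ht, by simp⟩

lemma minorIdeal_one_le {a b : Fin n} {J : Ideal (MvPolynomial (Fin n × Fin n) κ)}
    (h : ∀ s ≤ a, ∀ t ≤ b, X (s, t) ∈ J) : minorIdeal (κ := κ) 1 a b ≤ J := by
  rw [minorIdeal, Ideal.span_le]
  rintro _ ⟨ρ, γ, -, -, hρa, hγb, rfl⟩
  simpa using h _ (hρa 0) _ (hγb 0)

end MinorIdeal

section SchubertIdeal

variable {κ : Type} [Field κ] {n : ℕ}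

lemma schubertIdeal_le_iff (w : Equiv.Perm (Fin n)) {J : Ideal (MvPolynomial (Fin n × Fin n) κ)} :
    schubertIdeal w ≤ J ↔ ∀ i j, minorIdeal (rkIic w i j + 1) i j ≤ J := by
  simp [schubertIdeal, Ideal.sum_eq_sup, Finset.sup_le_iff]

lemma minorIdeal_le_schubertIdeal (w : Equiv.Perm (Fin n)) (i j : Fin n) :
    minorIdeal (κ := κ) (rkIic w i j + 1) i j ≤ schubertIdeal (κ := κ) w :=
  (schubertIdeal_le_iff w).1 le_rfl i j

lemma X_mem_schubertIdeal {w : Equiv.Perm (Fin n)} {a b : Fin n} (h0 : rkIic w a b = 0) :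
    (X (a, b) : MvPolynomial (Fin n × Fin n) κ) ∈ schubertIdeal (κ := κ) w :=
  minorIdeal_le_schubertIdeal w a b (by rw [h0]; exact X_mem_minorIdeal_one le_rfl le_rfl)

lemma schubertIdeal_mul_swap_le {w : Equiv.Perm (Fin n)} {a b : Fin n} (hab : (a, b) ∈ Dset w) :
    schubertIdeal (κ := κ) (w * Equiv.swap a (w⁻¹ b)) ≤ schubertIdeal (κ := κ) w := by
  refine (schubertIdeal_le_iff _).2 fun i j => ?_
  rw [rkIic_mul_swap w hab]
  split_ifs
  · exact (minorIdeal_succ_le _ i j).trans (minorIdeal_le_schubertIdeal w i j)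
  · exact minorIdeal_le_schubertIdeal w i j

lemma minorIdeal_rkIic_le_of_succ_eq_row (w : Equiv.Perm (Fin n)) {i i' : Fin n} (j : Fin n)
    (hi : (i' : ℕ) + 1 = i) (hwi : w i ≤ j) :
    minorIdeal (κ := κ) (rkIic w i j + 1) i j ≤
      minorIdeal (κ := κ) (rkIic w i' j + 1) i' j := by
  rw [rkIic_of_succ_eq_row w j hi, if_pos hwi]
  exact minorIdeal_succ_le_of_succ_eq_row _ j hi

lemma minorIdeal_rkIic_le_of_succ_eq_col (w : Equiv.Perm (Fin n)) (i : Fin n) {j j' : Fin n}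
    (hj : (j' : ℕ) + 1 = j) (hwj : w⁻¹ j ≤ i) :
    minorIdeal (κ := κ) (rkIic w i j + 1) i j ≤
      minorIdeal (κ := κ) (rkIic w i j' + 1) i j' := by
  rw [rkIic_of_succ_eq_col w i hj, if_pos hwj]
  exact minorIdeal_succ_le_of_succ_eq_col _ i hj

lemma minorIdeal_rkIic_le_of_isLOC {w : Equiv.Perm (Fin n)} {a b : Fin n} (hloc : IsLOC w (a, b))
    {i j : Fin n} (hai : a ≤ i) (hic : i < w⁻¹ b) (hbj : b ≤ j) (hja : j < w a) :
    minorIdeal (κ := κ) (rkIic w i j + 1) i j ≤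
      minorIdeal (κ := κ) (rkIic w a b + 1) a b := by
  induction hm : (i : ℕ) + j using Nat.strong_induction_on generalizing i j with
  | _ m ih =>
    by_cases hij : (i, j) = (a, b)
    · obtain ⟨rfl, rfl⟩ := Prod.mk.inj hij
      exact le_rfl
    have hnot : ¬ (j < w i ∧ i < w⁻¹ j) := fun hD => hij (hloc.2 (i, j) hD hai hbj)
    rw [not_and_or, not_lt, not_lt] at hnot
    rcases hnot with hwi | hwj
    · have hai' : a < i := lt_of_le_of_ne hai (by rintro rfl; exact hja.not_ge hwi)
      have hi : ((⟨i - 1, by omega⟩ : Fin n) : ℕ) + 1 = i := by simp only; omega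
      refine (minorIdeal_rkIic_le_of_succ_eq_row w j hi hwi).trans
        (ih _ (by omega) ?_ ?_ hbj hja rfl)
      all_goals simp only [Fin.le_def, Fin.lt_def] at hai' hic ⊢; omega
    · have hbj' : b < j := lt_of_le_of_ne hbj (by rintro rfl; exact hic.not_ge hwj)
      have hj : ((⟨j - 1, by omega⟩ : Fin n) : ℕ) + 1 = j := by simp only; omega
      refine (minorIdeal_rkIic_le_of_succ_eq_col w i hj hwj).trans
        (ih _ (by omega) hai hic ?_ ?_ rfl)
      all_goals simp only [Fin.le_def, Fin.lt_def] at hbj' hja ⊢; omega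

lemma minorIdeal_one_le_schubertIdeal_mul_swap_sup {w : Equiv.Perm (Fin n)} {a b : Fin n}
    (hab : (a, b) ∈ Dset w) (h0 : rkIic w a b = 0) :
    minorIdeal (κ := κ) 1 a b ≤
      schubertIdeal (κ := κ) (w * Equiv.swap a (w⁻¹ b)) + Ideal.span {X (a, b)} := by
  refine minorIdeal_one_le fun s hs t ht => ?_
  by_cases hst : (s, t) = (a, b)
  · rw [hst]
    exact Submodule.mem_sup_right (Ideal.mem_span_singleton_self _)
  refine Submodule.mem_sup_left (X_mem_schubertIdeal ?_)
  have hst0 : rkIic w s t = 0 := Nat.le_zero.1 (h0 ▸ rkIic_mono w hs ht)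
  rw [rkIic_mul_swap w hab, if_neg, hst0]
  rintro ⟨has, -, hbt, -⟩
  exact hst (by rw [le_antisymm hs has, le_antisymm ht hbt])

end SchubertIdeal

/-- If `(a,b)` is a lower outside corner of `D(w)` with `rk_w(a,b) = 0`, then
`z_{a,b} ∈ I_w` and `I_w = I_v + (z_{a,b})` where `v = w·t_{a,w⁻¹(b)}`. -/
theorem stmt_19 {κ : Type} [Field κ] {n : ℕ} (w : Equiv.Perm (Fin n))
    (a b : Fin n) (hloc : IsLOC w (a, b)) (h0 : rkIic w a b = 0) :
    (MvPolynomial.X (a, b) : MvPolynomial (Fin n × Fin n) κ) ∈ schubertIdeal (κ := κ) w ∧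
    schubertIdeal (κ := κ) w =
      schubertIdeal (κ := κ) (w * Equiv.swap a (w⁻¹ b)) +
        Ideal.span {(MvPolynomial.X (a, b) : MvPolynomial (Fin n × Fin n) κ)} := by
  have hX : (X (a, b) : MvPolynomial (Fin n × Fin n) κ) ∈ schubertIdeal w :=
    X_mem_schubertIdeal h0
  refine ⟨hX, le_antisymm ((schubertIdeal_le_iff w).2 fun i j => ?_)
    (sup_le (schubertIdeal_mul_swap_le hloc.1) ((Ideal.span_singleton_le_iff_mem _).2 hX))⟩
  by_cases hR : a ≤ i ∧ i < w⁻¹ b ∧ b ≤ j ∧ j < w a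
  · obtain ⟨hai, hic, hbj, hja⟩ := hR
    calc minorIdeal (rkIic w i j + 1) i j
        ≤ minorIdeal (rkIic w a b + 1) a b := minorIdeal_rkIic_le_of_isLOC hloc hai hic hbj hja
      _ = minorIdeal 1 a b := by rw [h0]
      _ ≤ _ := minorIdeal_one_le_schubertIdeal_mul_swap_sup hloc.1 h0
  · have hrk := rkIic_mul_swap w hloc.1 i j
    rw [if_neg hR, add_zero] at hrk
    rw [← hrk]
    exact le_sup_of_le_left (minorIdeal_le_schubertIdeal _ i j)
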